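/- arXiv:2012.07054 — 2 statements merged into one kernel-verified Lean document; each statement's English description precedes it below -/
import Mathlib

section
/- Let f : ℝⁿ → ℝ be convex and μ-smooth with whitened sketch matrix Q_S = U_S V_Sᵀ, where S = U_S Σ_S V_Sᵀ is a thin SVD of a d×m matrix S of rank m. Let α†* minimize α ↦ f(AQ_S α) + (λ/2)‖α‖². Then α* := V_S Σ_S^{-1} V_Sᵀ α†* minimizes α ↦ f(ASα) + (λ/2)‖Sα‖², and moreover Q_S α†* = S α*; consequently the zero-order estimators S α* and Q_S α†* coincide, as do the first-order estimators -(1/λ)Aᵀ∇f(ASα*) and -(1/λ)Aᵀ∇f(AQ_S α†*). -/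
open scoped RealInnerProductSpace
open Matrix MeasureTheory ProbabilityTheory

noncomputable section

abbrev EuclR (n : ℕ) := EuclideanSpace ℝ (Fin n)

def matVec {p q : ℕ} (M : Matrix (Fin p) (Fin q) ℝ) (x : EuclR q) : EuclR p :=
  Matrix.toEuclideanLin M x

def matCLM {p q : ℕ} (M : Matrix (Fin p) (Fin q) ℝ) : EuclR q →L[ℝ] EuclR p :=
  LinearMap.toContinuousLinearMap (Matrix.toEuclideanLin M)

def ranM {p q : ℕ} (M : Matrix (Fin p) (Fin q) ℝ) : Submodule ℝ (EuclR p) :=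
  LinearMap.range (Matrix.toEuclideanLin M)

def projOn {p : ℕ} (K : Submodule ℝ (EuclR p)) (x : EuclR p) : EuclR p :=
  (K.orthogonalProjectionOnto x : EuclR p)

def perpCLM {p : ℕ} (K : Submodule ℝ (EuclR p)) : EuclR p →L[ℝ] EuclR p :=
  ContinuousLinearMap.id ℝ (EuclR p) - K.subtypeL.comp K.orthogonalProjectionOnto

def fconj {p : ℕ} (f : EuclR p → ℝ) (z : EuclR p) : EReal :=
  ⨆ w : EuclR p, ((⟪w, z⟫ - f w : ℝ) : EReal)

def fdom {p : ℕ} (f : EuclR p → ℝ) : Set (EuclR p) := {z | fconj f z ≠ ⊤}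

def tcone {p : ℕ} (f : EuclR p → ℝ) (z : EuclR p) : Set (EuclR p) :=
  {Δ | ∃ t : ℝ, 0 ≤ t ∧ ∃ y ∈ fdom f, Δ = t • (y - z)}

def ZfVal {n d m : ℕ} (f : EuclR n → ℝ) (zs : EuclR n)
    (A : Matrix (Fin n) (Fin d) ℝ) (S : Matrix (Fin d) (Fin m) ℝ) : ℝ :=
  sSup ((fun Δ => ‖matVec Aᵀ Δ - projOn (ranM S) (matVec Aᵀ Δ)‖) ''
    (tcone f zs ∩ Metric.closedBall 0 1))

/-! Writing `T := V_S Σ_S V_Sᵀ`, the sketch factors as `S = Q_S T` with `T` invertible and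
`Q_S` having orthonormal columns. Hence `α ↦ f(ASα) + (λ/2)‖Sα‖²` is the whitened objective
`β ↦ f(AQ_Sβ) + (λ/2)‖β‖²` composed with the bijection `β = Tα`, and `α* = T⁻¹α†*` is mapped
to `α†*`, which also gives `Sα* = Q_Sα†*`. -/

lemma matVec_mul {p q r : ℕ} (M : Matrix (Fin p) (Fin q) ℝ) (N : Matrix (Fin q) (Fin r) ℝ)
    (x : EuclR r) : matVec (M * N) x = matVec M (matVec N x) := by
  simp [matVec, Matrix.toLpLin_apply, Matrix.mulVec_mulVec]

lemma norm_matVec_of_transpose_mul_self {p q : ℕ} {Q : Matrix (Fin p) (Fin q) ℝ}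
    (hQ : Qᵀ * Q = 1) (x : EuclR q) : ‖matVec Q x‖ = ‖x‖ := by
  have hinner : ⟪matVec Q x, matVec Q x⟫ = ⟪x, x⟫ := by
    simp only [matVec, Matrix.toLpLin_apply, EuclideanSpace.inner_eq_star_dotProduct, star_trivial]
    rw [Matrix.dotProduct_mulVec, Matrix.vecMul_mulVec, ← Matrix.mulVec_transpose, hQ,
      Matrix.transpose_one, Matrix.one_mulVec]
  rw [← sq_eq_sq₀ (norm_nonneg _) (norm_nonneg _), ← real_inner_self_eq_norm_sq,
    ← real_inner_self_eq_norm_sq, hinner]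

def sketchedObjective {n d m : ℕ} (f : EuclR n → ℝ) (lam : ℝ) (A : Matrix (Fin n) (Fin d) ℝ)
    (S : Matrix (Fin d) (Fin m) ℝ) (α : EuclR m) : ℝ :=
  f (matVec (A * S) α) + lam / 2 * ‖matVec S α‖ ^ 2

section

variable {n d m k : ℕ} (f : EuclR n → ℝ) (lam : ℝ) (A : Matrix (Fin n) (Fin d) ℝ)

lemma sketchedObjective_mul (Q : Matrix (Fin d) (Fin k) ℝ) (T : Matrix (Fin k) (Fin m) ℝ)
    (α : EuclR m) :
    sketchedObjective f lam A (Q * T) α = sketchedObjective f lam A Q (matVec T α) := by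
  simp only [sketchedObjective, ← Matrix.mul_assoc, matVec_mul]

lemma sketchedObjective_of_transpose_mul_self {Q : Matrix (Fin d) (Fin m) ℝ} (hQ : Qᵀ * Q = 1)
    (α : EuclR m) :
    sketchedObjective f lam A Q α = f (matVec (A * Q) α) + lam / 2 * ‖α‖ ^ 2 := by
  rw [sketchedObjective, norm_matVec_of_transpose_mul_self hQ]

end

section

variable {d m : ℕ} {US : Matrix (Fin d) (Fin m) ℝ} {SgS VS : Matrix (Fin m) (Fin m) ℝ}

lemma svd_eq_whitened_mul (hVS : VSᵀ * VS = 1) :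
    US * SgS * VSᵀ = US * VSᵀ * (VS * SgS * VSᵀ) := by
  simp only [Matrix.mul_assoc]
  rw [← Matrix.mul_assoc VSᵀ VS, hVS, Matrix.one_mul]

lemma svd_mul_whitening (hVS : VSᵀ * VS = 1) (hSgS : IsUnit SgS.det) :
    US * SgS * VSᵀ * (VS * SgS⁻¹ * VSᵀ) = US * VSᵀ := by
  simp only [Matrix.mul_assoc]
  rw [← Matrix.mul_assoc VSᵀ VS, hVS, Matrix.one_mul, ← Matrix.mul_assoc SgS,
    Matrix.mul_nonsing_inv SgS hSgS, Matrix.one_mul]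

lemma whitened_transpose_mul_self (hUS : USᵀ * US = 1) (hVS' : VS * VSᵀ = 1) :
    (US * VSᵀ)ᵀ * (US * VSᵀ) = 1 := by
  rw [Matrix.transpose_mul, Matrix.transpose_transpose, Matrix.mul_assoc,
    ← Matrix.mul_assoc USᵀ US, hUS, Matrix.one_mul, hVS']

end

theorem whitened_sketch_equivalence_general (n d m : ℕ) (f : EuclR n → ℝ) (lam : ℝ)
    (A : Matrix (Fin n) (Fin d) ℝ)
    (S US : Matrix (Fin d) (Fin m) ℝ) (SgS VS : Matrix (Fin m) (Fin m) ℝ)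
    (hSVD : S = US * SgS * VSᵀ) (hUS : USᵀ * US = 1)
    (hVS : VSᵀ * VS = 1) (hVS' : VS * VSᵀ = 1)
    (hSginv : IsUnit SgS.det)
    (Q : Matrix (Fin d) (Fin m) ℝ) (hQ : Q = US * VSᵀ)
    (αdag : EuclR m)
    (hαdag : ∀ α, f (matVec (A * Q) αdag) + lam / 2 * ‖αdag‖ ^ 2
        ≤ f (matVec (A * Q) α) + lam / 2 * ‖α‖ ^ 2)
    (αs : EuclR m) (hαs : αs = matVec (VS * SgS⁻¹ * VSᵀ) αdag) :
    (∀ α, f (matVec (A * S) αs) + lam / 2 * ‖matVec S αs‖ ^ 2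
        ≤ f (matVec (A * S) α) + lam / 2 * ‖matVec S α‖ ^ 2) ∧
    matVec Q αdag = matVec S αs ∧
    (-(1 / lam)) • matVec Aᵀ (gradient f (matVec (A * S) αs))
      = (-(1 / lam)) • matVec Aᵀ (gradient f (matVec (A * Q) αdag)) := by
  have hQQ : Qᵀ * Q = 1 := hQ ▸ whitened_transpose_mul_self hUS hVS'
  have hS : S = Q * (VS * SgS * VSᵀ) := by rw [hSVD, hQ, svd_eq_whitened_mul hVS]
  have hQS : matVec Q αdag = matVec S αs := by
    rw [hαs, ← matVec_mul, hSVD, svd_mul_whitening hVS hSginv, hQ]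
  have hobj : sketchedObjective f lam A S αs = sketchedObjective f lam A Q αdag := by
    rw [hαs, ← sketchedObjective_mul, hSVD, svd_mul_whitening hVS hSginv, hQ]
  refine ⟨fun α => ?_, hQS, by rw [matVec_mul A S, ← hQS, ← matVec_mul]⟩
  change sketchedObjective f lam A S αs ≤ sketchedObjective f lam A S α
  rw [hobj, hS, sketchedObjective_mul, sketchedObjective_of_transpose_mul_self f lam A hQQ,
    sketchedObjective_of_transpose_mul_self f lam A hQQ]
  exact hαdag _

/-- equivalence of the whitened and the original sketched programs. -/
theorem whitened_sketch_equivalence (n d m : ℕ) (f : EuclR n → ℝ) (μ lam : ℝ)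
    (hμ : 0 < μ) (hlam : 0 < lam)
    (hconv : ConvexOn ℝ Set.univ f)
    (hdiff : ∀ x, HasGradientAt f (gradient f x) x)
    (hsmooth : ∀ x y, ‖gradient f y - gradient f x‖ ≤ μ * ‖y - x‖)
    (A : Matrix (Fin n) (Fin d) ℝ)
    (S US : Matrix (Fin d) (Fin m) ℝ) (SgS VS : Matrix (Fin m) (Fin m) ℝ)
    (hSVD : S = US * SgS * VSᵀ) (hUS : USᵀ * US = 1)
    (hVS : VSᵀ * VS = 1) (hVS' : VS * VSᵀ = 1)
    (hSgdiag : SgS.IsDiag) (hSginv : IsUnit SgS.det)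
    (Q : Matrix (Fin d) (Fin m) ℝ) (hQ : Q = US * VSᵀ)
    (αdag : EuclR m)
    (hαdag : ∀ α, f (matVec (A * Q) αdag) + lam / 2 * ‖αdag‖ ^ 2
        ≤ f (matVec (A * Q) α) + lam / 2 * ‖α‖ ^ 2)
    (αs : EuclR m) (hαs : αs = matVec (VS * SgS⁻¹ * VSᵀ) αdag) :
    (∀ α, f (matVec (A * S) αs) + lam / 2 * ‖matVec S αs‖ ^ 2
        ≤ f (matVec (A * S) α) + lam / 2 * ‖matVec S α‖ ^ 2) ∧
    matVec Q αdag = matVec S αs ∧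
    (-(1 / lam)) • matVec Aᵀ (gradient f (matVec (A * S) αs))
      = (-(1 / lam)) • matVec Aᵀ (gradient f (matVec (A * Q) αdag)) :=
  whitened_sketch_equivalence_general n d m f lam A S US SgS VS hSVD hUS hVS hVS' hSginv Q hQ αdag
    hαdag αs hαs
end
end

section
/- Fix K ∈ {1,...,ρ} such that σ_K² > ‖P_{AS}^⊥A‖₂², set δ_K = √(σ_K² - ‖P_{AS}^⊥A‖₂²), and let 0 < δ < δ_K. Then there exist points x₁,...,x_M in the Euclidean unit ball of ℝᵈ with M ≥ 2^K such that ‖P_{AS}A(x_j - x_k)‖ > δ/2 for all j ≠ k, and ‖P_{AS}A(x_j - x_k)‖ ≤ 2δ for all j, k. -/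
open scoped RealInnerProductSpace
open Matrix MeasureTheory ProbabilityTheory

noncomputable section

/-- The eigenvalues of a Hermitian real matrix sorted in descending order. -/
def eigDesc {p : ℕ} {M : Matrix (Fin p) (Fin p) ℝ} (hM : M.IsHermitian) : Fin p → ℝ :=
  fun j => (hM.eigenvalues ∘ Tuple.sort hM.eigenvalues) j.rev

/-! On the span `V` of the top `K` eigenvectors of `AᵀA` we have `‖A x‖² ≥ σ_K² ‖x‖²`, and by
Pythagoras `‖P_{AS} A x‖² ≥ ‖A x‖² - ‖P_{AS}^⊥ A‖² ‖x‖²`, so `T = P_{AS} A` satisfies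
`‖T x‖ ≥ δ_K ‖x‖` on `V`. Hence `T` maps `V` isomorphically onto a `K`-dimensional space `W`.
A maximal `(δ/2)`-separated subset of the `δ`-ball of `W` is a `(δ/2)`-cover of it, so comparing
volumes it has at least `2^K` points; their preimages in `V` have norm at most `δ / δ_K < 1`. -/

open Module Finset
open scoped NNReal ENNReal

namespace Metric

lemma packingNumber_ne_top_of_isCompact {X : Type*} [PseudoEMetricSpace X] {ε : ℝ≥0}
    {A : Set X} (hε : ε ≠ 0) (hA : IsCompact A) : packingNumber ε A ≠ ⊤ := by
  obtain ⟨N, -, hN, hcover⟩ :=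
    exists_finite_isCover_of_isCompact (ε := ε / 2) (by simpa using hε) hA
  refine ne_top_of_le_ne_top hN.encard_lt_top.ne ?_
  calc packingNumber ε A = packingNumber (2 * (ε / 2)) A := by rw [mul_div_cancel₀ _ two_ne_zero]
    _ ≤ externalCoveringNumber (ε / 2) A := packingNumber_two_mul_le_externalCoveringNumber _ _
    _ ≤ N.encard := hcover.externalCoveringNumber_le_encard

variable {E : Type*} [NormedAddCommGroup E] [NormedSpace ℝ E] [FiniteDimensional ℝ E]

lemma IsCover.pow_finrank_le_card_mul {r ε : ℝ≥0} {N : Finset E}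
    (hN : IsCover ε (closedBall (0 : E) r) N) :
    r ^ finrank ℝ E ≤ #N * ε ^ finrank ℝ E := by
  borelize E
  obtain ⟨μ, _⟩ : ∃ μ : Measure E, μ.IsAddHaarMeasure := ⟨Measure.addHaar, inferInstance⟩
  have hvol : μ (closedBall 0 r) ≤ ∑ y ∈ N, μ (closedBall y ε) :=
    (measure_mono (by simpa using hN.subset_iUnion_closedBall)).trans
      (measure_biUnion_finset_le N _)
  simp only [Measure.addHaar_closedBall μ _ r.coe_nonneg,
    Measure.addHaar_closedBall μ _ ε.coe_nonneg, sum_const, nsmul_eq_mul, ← mul_assoc] at hvol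
  have hball : μ (ball 0 1) ≠ 0 := (measure_ball_pos μ _ one_pos).ne'
  rw [ENNReal.mul_le_mul_iff_left hball measure_ball_lt_top.ne] at hvol
  rw [← ENNReal.coe_le_coe]
  simpa [← NNReal.coe_pow, ENNReal.ofReal_coe_nnreal] using hvol

lemma exists_finset_isSeparated_closedBall {δ : ℝ≥0} (hδ : δ ≠ 0) :
    ∃ s : Finset E, 2 ^ finrank ℝ E ≤ #s ∧ (s : Set E) ⊆ closedBall 0 δ ∧
      IsSeparated (δ / 2 : ℝ≥0) (s : Set E) := by
  have hfin : packingNumber (δ / 2) (closedBall (0 : E) δ) ≠ ⊤ :=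
    packingNumber_ne_top_of_isCompact (by simpa using hδ) (isCompact_closedBall _ _)
  have hC : (maximalSeparatedSet (δ / 2) (closedBall (0 : E) δ)).Finite := by
    rw [← Set.encard_ne_top_iff, encard_maximalSeparatedSet hfin]
    exact hfin
  refine ⟨hC.toFinset, ?_, by simpa using maximalSeparatedSet_subset (ε := δ / 2),
    by rw [hC.coe_toFinset]; exact isSeparated_maximalSeparatedSet⟩
  have hvol : δ ^ finrank ℝ E ≤ #hC.toFinset * (δ / 2) ^ finrank ℝ E :=
    IsCover.pow_finrank_le_card_mul (by simpa using isCover_maximalSeparatedSet hfin)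
  rw [div_pow, ← mul_div_assoc, le_div_iff₀ (by positivity), mul_comm] at hvol
  exact_mod_cast le_of_mul_le_mul_right hvol (pow_pos (pos_of_ne_zero hδ) _)

end Metric

open Submodule in
lemma OrthonormalBasis.mul_norm_sq_le_inner_of_mem_span {ι E : Type*} [Fintype ι]
    [NormedAddCommGroup E] [InnerProductSpace ℝ E] (b : OrthonormalBasis ι ℝ E)
    {T : E →ₗ[ℝ] E} (hT : T.IsSymmetric) {eig : ι → ℝ} (hb : ∀ i, T (b i) = eig i • b i)
    {s : Set ι} {c : ℝ} (hc : ∀ i ∈ s, c ≤ eig i) {x : E} (hx : x ∈ span ℝ (b '' s)) :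
    c * ‖x‖ ^ 2 ≤ ⟪x, T x⟫ := by
  have hzero : ∀ i ∉ s, ⟪b i, x⟫ = 0 := fun i hi => by
    have : span ℝ (b '' s) ≤ (ℝ ∙ b i)ᗮ := span_le.mpr <| by
      rintro _ ⟨j, hj, rfl⟩
      exact mem_orthogonal_singleton_iff_inner_right.mpr
        (b.orthonormal.2 (ne_of_mem_of_not_mem hj hi).symm)
    exact mem_orthogonal_singleton_iff_inner_right.mp (this hx)
  calc c * ‖x‖ ^ 2 = ∑ i, c * ⟪b i, x⟫ ^ 2 := by rw [← b.sum_sq_inner_right, mul_sum]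
    _ ≤ ∑ i, eig i * ⟪b i, x⟫ ^ 2 := sum_le_sum fun i _ => by
      by_cases hi : i ∈ s
      · exact mul_le_mul_of_nonneg_right (hc i hi) (sq_nonneg _)
      · simp [hzero i hi]
    _ = ⟪x, T x⟫ := by
      rw [← b.sum_inner_mul_inner]
      refine sum_congr rfl fun i _ => ?_
      rw [← hT, hb, real_inner_smul_left, real_inner_comm]
      ring

open Submodule in
lemma Matrix.IsHermitian.exists_finrank_eq_eigDesc_mul_norm_sq_le {p : ℕ}
    {M : Matrix (Fin p) (Fin p) ℝ} (hM : M.IsHermitian) (j : Fin p) :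
    ∃ V : Submodule ℝ (EuclR p), finrank ℝ V = j + 1 ∧
      ∀ x ∈ V, eigDesc hM j * ‖x‖ ^ 2 ≤ ⟪x, toEuclideanLin M x⟫ := by
  let σ := Tuple.sort hM.eigenvalues
  let b := hM.eigenvectorBasis.reindex σ.symm
  have hb : ∀ i, toEuclideanLin M (b i) = (hM.eigenvalues ∘ σ) i • b i := fun i => by
    ext k
    simpa [b, toLpLin_apply] using congrFun (hM.mulVec_eigenvectorBasis (σ i)) k
  refine ⟨span ℝ (b '' Set.Ici j.rev), ?_, fun x hx =>
    b.mul_norm_sq_le_inner_of_mem_span (isSymmetric_toEuclideanLin_iff.mpr hM) hb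
      (fun i hi => Tuple.monotone_sort _ hi) hx⟩
  rw [Set.image_eq_range]
  refine (finrank_span_eq_card (b.orthonormal.linearIndependent.comp
    ((↑) : Set.Ici j.rev → Fin p) Subtype.coe_injective)).trans ?_
  rw [Fintype.card_Ici, Fin.card_Ici, Fin.val_rev]
  omega

lemma norm_sq_sub_opNorm_sq_mul_le_norm_starProjection_sq {𝕜 E F : Type*} [RCLike 𝕜]
    [SeminormedAddCommGroup E] [NormedSpace 𝕜 E] [NormedAddCommGroup F] [InnerProductSpace 𝕜 F]
    (f : E →L[𝕜] F) (U : Submodule 𝕜 F) [U.HasOrthogonalProjection] (x : E) :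
    ‖f x‖ ^ 2 - ‖Uᗮ.starProjection ∘L f‖ ^ 2 * ‖x‖ ^ 2 ≤ ‖U.starProjection (f x)‖ ^ 2 := by
  have hpyth := Submodule.norm_sq_eq_add_norm_sq_starProjection (f x) U
  have hop : ‖Uᗮ.starProjection (f x)‖ ^ 2 ≤ (‖Uᗮ.starProjection ∘L f‖ * ‖x‖) ^ 2 :=
    pow_le_pow_left₀ (norm_nonneg _) ((Uᗮ.starProjection ∘L f).le_opNorm x) 2
  rw [mul_pow] at hop
  linarith

lemma perpCLM_eq_starProjection_orthogonal {p : ℕ} (U : Submodule ℝ (EuclR p)) :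
    perpCLM U = Uᗮ.starProjection :=
  (Submodule.starProjection_orthogonal U).symm

lemma Matrix.inner_toEuclideanLin_transpose_mul_self {n d : ℕ}
    (A : Matrix (Fin n) (Fin d) ℝ) (x : EuclR d) :
    ⟪x, toEuclideanLin (Aᵀ * A) x⟫ = ‖toEuclideanLin A x‖ ^ 2 := by
  rw [← conjTranspose_eq_transpose_of_trivial, toLpLin_mul_same,
    LinearMap.comp_apply, toEuclideanLin_conjTranspose_eq_adjoint,
    LinearMap.adjoint_inner_right, real_inner_self_eq_norm_sq]

lemma LinearMap.exists_packing_of_mul_norm_le_norm {E F : Type*} [NormedAddCommGroup E]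
    [NormedSpace ℝ E] [NormedAddCommGroup F] [NormedSpace ℝ F] (f : E →ₗ[ℝ] F) (V : Submodule ℝ E)
    [FiniteDimensional ℝ V] {c δ : ℝ} (hδ : 0 < δ) (hδc : δ ≤ c)
    (hf : ∀ x ∈ V, c * ‖x‖ ≤ ‖f x‖) :
    ∃ (M : ℕ) (x : Fin M → E), 2 ^ finrank ℝ V ≤ M ∧ (∀ j, ‖x j‖ ≤ 1) ∧
      (∀ j k, j ≠ k → δ / 2 < ‖f (x j) - f (x k)‖) ∧ ∀ j k, ‖f (x j) - f (x k)‖ ≤ 2 * δ := by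
  let g := f.domRestrict V
  have hg : Function.Injective g := by
    rw [← LinearMap.ker_eq_bot, LinearMap.ker_eq_bot']
    intro x hx
    have := hf x x.2
    rw [show f x = 0 from hx, norm_zero] at this
    exact Subtype.ext (norm_eq_zero.mp (by nlinarith [norm_nonneg (x : E)]))
  let e := LinearEquiv.ofInjective g hg
  obtain ⟨s, hcard, hball, hsep⟩ :=
    Metric.exists_finset_isSeparated_closedBall (E := LinearMap.range g)
      (Real.toNNReal_pos.mpr hδ).ne'
  let w : Fin #s → LinearMap.range g := fun j => s.equivFin.symm j
  have hfx : ∀ j, f (e.symm (w j)) = w j := fun j =>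
    congrArg Subtype.val (e.apply_symm_apply (w j))
  have hw : ∀ j, ‖(w j : F)‖ ≤ δ := fun j => by
    simpa [hδ.le] using hball (s.equivFin.symm j).2
  refine ⟨#s, fun j => e.symm (w j), e.finrank_eq ▸ hcard, fun j => ?_, fun j k hjk => ?_,
    fun j k => ?_⟩ <;> simp only [hfx]
  · have hc : 0 < c := hδ.trans_le hδc
    have := (hf _ (e.symm (w j)).2).trans (hfx j ▸ (hw j).trans hδc)
    exact le_of_mul_le_mul_left (by simpa using this) hc
  · have hne : w j ≠ w k := fun h => hjk (s.equivFin.symm.injective (Subtype.ext h))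
    have : ((δ.toNNReal / 2 : ℝ≥0) : ℝ≥0∞) < edist (w j) (w k) :=
      hsep (s.equivFin.symm j).2 (s.equivFin.symm k).2 hne
    rw [edist_nndist, ENNReal.coe_lt_coe, ← NNReal.coe_lt_coe, coe_nndist] at this
    simpa [hδ.le, dist_eq_norm] using this
  · linarith [norm_sub_le (w j : F) (w k), hw j, hw k]

/-- existence of a local packing for the Fano argument (Lemma on packing
numbers). σ_K² is the K-th largest eigenvalue of AᵀA. -/
theorem exists_packing (n d m : ℕ)
    (A : Matrix (Fin n) (Fin d) ℝ) (S : Matrix (Fin d) (Fin m) ℝ)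
    (K : ℕ) (hK1 : 1 ≤ K) (hKd : K ≤ d)
    (δ : ℝ) (hδ : 0 < δ)
    (hδ' : δ < Real.sqrt (eigDesc (show (Aᵀ * A).IsHermitian by simpa using Matrix.isHermitian_conjTranspose_mul_self A) ⟨K - 1, by omega⟩
        - ‖(perpCLM (ranM (A * S))).comp (matCLM A)‖ ^ 2)) :
    ∃ (M : ℕ) (x : Fin M → EuclR d),
      2 ^ K ≤ M ∧
      (∀ j, ‖x j‖ ≤ 1) ∧
      (∀ j k, j ≠ k →
        δ / 2 < ‖projOn (ranM (A * S)) (matVec A (x j)) - projOn (ranM (A * S)) (matVec A (x k))‖) ∧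
      (∀ j k,
        ‖projOn (ranM (A * S)) (matVec A (x j)) - projOn (ranM (A * S)) (matVec A (x k))‖ ≤ 2 * δ) := by
  have hN : (Aᵀ * A).IsHermitian := by simpa using Matrix.isHermitian_conjTranspose_mul_self A
  obtain ⟨V, hV, hσV⟩ := hN.exists_finrank_eq_eigDesc_mul_norm_sq_le ⟨K - 1, by omega⟩
  set U := ranM (A * S)
  set gap := eigDesc hN ⟨K - 1, by omega⟩ - ‖perpCLM U ∘L matCLM A‖ ^ 2
  -- `Real.sqrt` vanishes on negative numbers, so `0 < √gap` forces `0 < gap`.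
  have hgap : 0 ≤ gap := Real.sqrt_pos.mp (hδ.trans hδ') |>.le
  have hlow : ∀ x ∈ V, √gap * ‖x‖ ≤ ‖U.starProjection (matCLM A x)‖ := fun x hx => by
    have hA := norm_sq_sub_opNorm_sq_mul_le_norm_starProjection_sq (matCLM A) U x
    rw [← perpCLM_eq_starProjection_orthogonal] at hA
    have hσ := (hσV x hx).trans_eq (Matrix.inner_toEuclideanLin_transpose_mul_self A x)
    refine (pow_le_pow_iff_left₀ (by positivity) (norm_nonneg _) two_ne_zero).mp ?_
    rw [mul_pow, Real.sq_sqrt hgap, sub_mul]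
    exact (sub_le_sub_right hσ _).trans hA
  obtain ⟨M, x, hM, hx, hsep, hdiam⟩ :=
    (U.starProjection ∘L matCLM A).toLinearMap.exists_packing_of_mul_norm_le_norm V hδ hδ'.le
      hlow
  rw [hV, Nat.sub_add_cancel hK1] at hM
  exact ⟨M, x, hM, hx, hsep, hdiam⟩
end
end
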